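/- In the model M_{pq} (worlds w₁,w₂,w₃; p true exactly at w₁,w₂; q true exactly at w₂,w₃; all other atoms false everywhere), none of the six sets [⊤], [=(p)], [=(q)], [=(p)∧=(q)], [(=(p)∧=(q))⊗(=(p)∧=(q))], [⊥] equals [=(p) ⩔ =(q)] = downward closure of {{w₁,w₂},{w₂,w₃}}. -/
import Mathlib


/-- Formulas of propositional dependence logic D: literals, ⊥, dependence
atoms =(p₁,…,pₙ;q), conjunction and tensor. -/
inductive DForm (α : Type) : Type
  | atom : α → DForm α
  | natom : α → DForm α                    -- negated atom ¬p
  | bot : DForm α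
  | dep : List α → α → DForm α             -- dependence atom =(p₁,…,pₙ;q)
  | and : DForm α → DForm α → DForm α
  | tensor : DForm α → DForm α → DForm α

/-- Team/inquisitive support semantics for dependence logic. -/
def dsupports {W α : Type} (V : W → α → Prop) : Set W → DForm α → Prop
  | s, .atom p => ∀ w ∈ s, V w p
  | s, .natom p => ∀ w ∈ s, ¬ V w p
  | s, .bot => s = ∅
  | s, .dep ps q => ∀ w ∈ s, ∀ w' ∈ s,
      (∀ r ∈ ps, (V w r ↔ V w' r)) → (V w q ↔ V w' q)
  | s, .and ψ χ => dsupports V s ψ ∧ dsupports V s χ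
  | s, .tensor ψ χ => ∃ t₁ t₂, dsupports V t₁ ψ ∧ dsupports V t₂ χ ∧ s = t₁ ∪ t₂

/-- The proposition of a D formula: the set of supporting states. -/
def dprop {W α : Type} (V : W → α → Prop) (φ : DForm α) : Set (Set W) :=
  {s | dsupports V s φ}

/-- The constancy atom =(p): dependence atom with empty antecedent list. -/
def con {α : Type} (p : α) : DForm α := DForm.dep [] p

/-- Tensor of sets of states. -/
def tset {W : Type} (S T : Set (Set W)) : Set (Set W) :=
  {u | ∃ s ∈ S, ∃ t ∈ T, u = s ∪ t}

/-- The model M_pq (worlds w1 = 0, w2 = 1, w3 = 2): p is true exactly at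
w1, w2; q is true exactly at w2, w3; every other atom is false everywhere. -/
def VDpq {α : Type} (p q : α) : Fin 3 → α → Prop :=
  fun w r => (r = p ∧ (w = 0 ∨ w = 1)) ∨ (r = q ∧ (w = 1 ∨ w = 2))

/-- Atoms occurring in a D formula (including inside dependence atoms). -/
def DForm.datoms {α : Type} : DForm α → Set α
  | .atom r => {r}
  | .natom r => {r}
  | .bot => ∅
  | .dep ps q => {r | r ∈ ps} ∪ {q}
  | .and ψ χ => ψ.datoms ∪ χ.datoms
  | .tensor ψ χ => ψ.datoms ∪ χ.datoms

/-- φ is a context with designated atoms a, b: a and b occur neither negated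
nor inside a dependence atom. -/
def DForm.isContext {α : Type} (a b : α) : DForm α → Prop
  | .atom _ => True
  | .natom r => r ≠ a ∧ r ≠ b
  | .bot => True
  | .dep ps q => a ∉ ps ∧ b ∉ ps ∧ q ≠ a ∧ q ≠ b
  | .and ψ χ => ψ.isContext a b ∧ χ.isContext a b
  | .tensor ψ χ => ψ.isContext a b ∧ χ.isContext a b

/-- Substitute the formulas ψ, χ for the (positive, non-dependence)
occurrences of the designated atoms a, b. -/
def dsubstAB {α : Type} [DecidableEq α] (a b : α) (ψ χ : DForm α) :
    DForm α → DForm α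
  | .atom r => if r = a then ψ else if r = b then χ else .atom r
  | .natom r => .natom r
  | .bot => .bot
  | .dep ps q => .dep ps q
  | .and θ η => .and (dsubstAB a b ψ χ θ) (dsubstAB a b ψ χ η)
  | .tensor θ η => .tensor (dsubstAB a b ψ χ θ) (dsubstAB a b ψ χ η)

/-- in M_pq, [=(p) ⩔ =(q)] is the downward closure of
{{w1,w2},{w2,w3}}, and none of the six sets [⊤], [=(p)], [=(q)],
[=(p)∧=(q)], [(=(p)∧=(q))⊗(=(p)∧=(q))], [⊥] equals it. -/
theorem six_sets_ne_gdisj {α : Type} (p q : α) (hpq : p ≠ q) :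
    dprop (VDpq p q) (con p) ∪ dprop (VDpq p q) (con q) =
      {s : Set (Fin 3) | s ⊆ {0, 1} ∨ s ⊆ {1, 2}} ∧
    (Set.univ : Set (Set (Fin 3))) ≠
      {s : Set (Fin 3) | s ⊆ {0, 1} ∨ s ⊆ {1, 2}} ∧
    dprop (VDpq p q) (con p) ≠
      {s : Set (Fin 3) | s ⊆ {0, 1} ∨ s ⊆ {1, 2}} ∧
    dprop (VDpq p q) (con q) ≠
      {s : Set (Fin 3) | s ⊆ {0, 1} ∨ s ⊆ {1, 2}} ∧
    dprop (VDpq p q) (DForm.and (con p) (con q)) ≠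
      {s : Set (Fin 3) | s ⊆ {0, 1} ∨ s ⊆ {1, 2}} ∧
    dprop (VDpq p q)
        (DForm.tensor (DForm.and (con p) (con q)) (DForm.and (con p) (con q))) ≠
      {s : Set (Fin 3) | s ⊆ {0, 1} ∨ s ⊆ {1, 2}} ∧
    dprop (VDpq p q) DForm.bot ≠
      {s : Set (Fin 3) | s ⊆ {0, 1} ∨ s ⊆ {1, 2}} := by
  have hVp : ∀ w : Fin 3, VDpq p q w p ↔ (w = 0 ∨ w = 1) := by
    intro w; simp [VDpq, hpq]
  have hVq : ∀ w : Fin 3, VDpq p q w q ↔ (w = 1 ∨ w = 2) := by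
    intro w; simp [VDpq, Ne.symm hpq]
  have fin3 : ∀ w : Fin 3, w = 0 ∨ w = 1 ∨ w = 2 := by decide
  have hmemp : ∀ s : Set (Fin 3), s ∈ dprop (VDpq p q) (con p) ↔
      (s ⊆ ({0,1} : Set (Fin 3)) ∨ s ⊆ {2}) := by
    intro s
    simp only [dprop, con, dsupports, Set.mem_setOf_eq]
    constructor
    · intro h
      by_cases h2 : (2:Fin 3) ∈ s
      · right; intro w hw
        have := h w hw 2 h2 (by simp)
        rw [hVp, hVp] at this
        rcases fin3 w with hwe|hwe|hwe <;> subst hwe <;> simp_all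
      · left; intro w hw
        rcases fin3 w with hwe|hwe|hwe <;> subst hwe <;> simp_all
    · intro h w hw w' hw' _
      rw [hVp, hVp]
      rcases h with h|h
      · have h1 := h hw; have h2 := h hw'; simp_all
        try tauto
      · have h1 := h hw; have h2 := h hw'; simp_all
  have hmemq : ∀ s : Set (Fin 3), s ∈ dprop (VDpq p q) (con q) ↔
      (s ⊆ ({1,2} : Set (Fin 3)) ∨ s ⊆ {0}) := by
    intro s
    simp only [dprop, con, dsupports, Set.mem_setOf_eq]
    constructor
    · intro h
      by_cases h0 : (0:Fin 3) ∈ s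
      · right; intro w hw
        have := h w hw 0 h0 (by simp)
        rw [hVq, hVq] at this
        rcases fin3 w with hwe|hwe|hwe <;> subst hwe <;> simp_all
      · left; intro w hw
        rcases fin3 w with hwe|hwe|hwe <;> subst hwe <;> simp_all
    · intro h w hw w' hw' _
      rw [hVq, hVq]
      rcases h with h|h
      · have h1 := h hw; have h2 := h hw'; simp_all
        try tauto
      · have h1 := h hw; have h2 := h hw'; simp_all
  refine ⟨?_, ?_, ?_, ?_, ?_, ?_, ?_⟩
  · ext s
    rw [Set.mem_union, hmemp, hmemq, Set.mem_setOf_eq]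
    constructor
    · rintro ((h|h)|(h|h))
      · left; exact h
      · right; exact h.trans (by intro x hx; simp_all)
      · right; exact h
      · left; exact h.trans (by intro x hx; simp_all)
    · rintro (h|h)
      · exact Or.inl (Or.inl h)
      · exact Or.inr (Or.inl h)
  · intro heq
    have h : (Set.univ : Set (Fin 3)) ∈ {s : Set (Fin 3) | s ⊆ {0, 1} ∨ s ⊆ {1, 2}} := by
      rw [← heq]; trivial
    rcases h with h|h
    · exact absurd (h (Set.mem_univ 2)) (by decide)
    · exact absurd (h (Set.mem_univ 0)) (by decide)
  · intro heq
    have h : ({1,2} : Set (Fin 3)) ∈ dprop (VDpq p q) (con p) := by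
      rw [heq]; right; rfl
    rw [hmemp] at h
    rcases h with h|h
    · exact absurd (h (show (2:Fin 3) ∈ ({1,2}:Set (Fin 3)) by simp)) (by decide)
    · exact absurd (h (show (1:Fin 3) ∈ ({1,2}:Set (Fin 3)) by simp)) (by decide)
  · intro heq
    have h : ({0,1} : Set (Fin 3)) ∈ dprop (VDpq p q) (con q) := by
      rw [heq]; left; rfl
    rw [hmemq] at h
    rcases h with h|h
    · exact absurd (h (show (0:Fin 3) ∈ ({0,1}:Set (Fin 3)) by simp)) (by decide)
    · exact absurd (h (show (1:Fin 3) ∈ ({0,1}:Set (Fin 3)) by simp)) (by decide)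
  · intro heq
    have h : ({0,1} : Set (Fin 3)) ∈ dprop (VDpq p q) (DForm.and (con p) (con q)) := by
      rw [heq]; left; rfl
    have h2 : ({0,1} : Set (Fin 3)) ∈ dprop (VDpq p q) (con q) := h.2
    rw [hmemq] at h2
    rcases h2 with h2|h2
    · exact absurd (h2 (show (0:Fin 3) ∈ ({0,1}:Set (Fin 3)) by simp)) (by decide)
    · exact absurd (h2 (show (1:Fin 3) ∈ ({0,1}:Set (Fin 3)) by simp)) (by decide)
  · intro heq
    have hsing : ∀ (w : Fin 3), dsupports (VDpq p q) {w} (DForm.and (con p) (con q)) := by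
      intro w
      constructor <;>
      · intro a ha b hb _
        simp only [Set.mem_singleton_iff] at ha hb
        subst ha; subst hb; rfl
    have h : ({0,2} : Set (Fin 3)) ∈ dprop (VDpq p q)
        (DForm.tensor (DForm.and (con p) (con q)) (DForm.and (con p) (con q))) := by
      exact ⟨{0}, {2}, hsing 0, hsing 2, by rw [Set.singleton_union]⟩
    rw [heq] at h
    rcases h with h|h
    · exact absurd (h (show (2:Fin 3) ∈ ({0,2}:Set (Fin 3)) by simp)) (by decide)
    · exact absurd (h (show (0:Fin 3) ∈ ({0,2}:Set (Fin 3)) by simp)) (by decide)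
  · intro heq
    have h : ({0,1} : Set (Fin 3)) ∈ dprop (VDpq p q) DForm.bot := by
      rw [heq]; left; rfl
    have h' : ({0,1} : Set (Fin 3)) = ∅ := h
    have : (0:Fin 3) ∈ (∅ : Set (Fin 3)) := h' ▸ (by simp)
    exact this
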